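/- arXiv:2603.23042 — 3 statements merged into one kernel-verified Lean document; each statement's English description precedes it below -/
import Mathlib

section
/- In the naive N-reel Markov reward process under the random policy, where at each step a reel index is chosen uniformly at random and a component weight is drawn i.i.d. from p, the long-run average cost equals the long-run average cost g_1 of the single-reel Markov reward process with the same component distribution; in particular the long-run average cost is independent of N. -/
open Finset

/-- Updated reel weight. -/
def reelE (B w x : ℕ) : ℕ := if x ≤ w then w - x else B - x

/-- Filament waste (real-valued). -/
def reelC (w x : ℕ) : ℝ := if x ≤ w then 0 else w

/-- One step of the single-reel Markov chain, acting on distributions over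
reel weights `{0,...,B-1}`: the reel receives a component `X ~ p` and moves
from `w` to `e(w,X)`. -/
noncomputable def step1 (B : ℕ) (p : ℕ → ℝ) (μ : ℕ → ℝ) : ℕ → ℝ :=
  fun w' => ∑ w ∈ range B, μ w *
    ∑ x ∈ (Icc 1 B).filter (fun x => reelE B w x = w'), p x

/-- Expected one-step cost of the single-reel chain in distribution `μ`. -/
noncomputable def ec1 (B : ℕ) (p : ℕ → ℝ) (μ : ℕ → ℝ) : ℝ :=
  ∑ w ∈ range B, μ w * ∑ x ∈ Icc 1 B, p x * reelC w x

/-- One step of the naive `N`-reel Markov chain under the random policy,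
acting on distributions over reel-weight vectors: a reel index `n` is chosen
uniformly, a component `X ~ p` arrives, and only coordinate `n` is updated to
`e(w_n, X)`. -/
noncomputable def stepN (B N : ℕ) (p : ℕ → ℝ)
    (ν : (Fin N → ℕ) → ℝ) : (Fin N → ℕ) → ℝ :=
  fun s' => ∑ s ∈ Fintype.piFinset (fun _ : Fin N => range B), ν s *
    ((1 / (N : ℝ)) * ∑ n : Fin N,
      ∑ x ∈ (Icc 1 B).filter
        (fun x => Function.update s n (reelE B (s n) x) = s'), p x)

/-- Expected one-step cost of the naive `N`-reel chain under the random
policy, in distribution `ν`. -/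
noncomputable def ecN (B N : ℕ) (p : ℕ → ℝ) (ν : (Fin N → ℕ) → ℝ) : ℝ :=
  ∑ s ∈ Fintype.piFinset (fun _ : Fin N => range B), ν s *
    ((1 / (N : ℝ)) * ∑ n : Fin N, ∑ x ∈ Icc 1 B, p x * reelC (s n) x)

/-
Under the random policy the marginal law of each reel evolves by the lazy chain
`Q = (1 - 1/N) I + (1/N) P` of the single-reel chain `P`, and the expected cost of the `N`-reel
chain is the average of the expected costs of the marginals. A chain `Q` with `I - Q = α (I - P)`
has the same Cesàro gain as `P`: the Cesàro averages `h_T` of `Q^t μ` satisfy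
`h_T - P h_T = (μ - Q^T μ) / (α T) → 0`, so averaging the cost once more along `P^s` changes it
little, while the `P`-Cesàro averages of the cost converge uniformly on the simplex, being affine
and convergent at its vertices.
-/

open Filter Topology

noncomputable def cesaroMean (a : ℕ → ℝ) (T : ℕ) : ℝ := 1 / (T : ℝ) * ∑ t ∈ range T, a t

lemma abs_cesaroMean_le {a : ℕ → ℝ} {K : ℝ} {T : ℕ} (h : ∀ t < T, |a t| ≤ K) (hK : 0 ≤ K) :
    |cesaroMean a T| ≤ K := by
  rcases T.eq_zero_or_pos with rfl | hT
  · simpa [cesaroMean] using hK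
  rw [cesaroMean, abs_mul, abs_of_pos (by positivity)]
  calc 1 / (T : ℝ) * |∑ t ∈ range T, a t| ≤ 1 / T * ∑ t ∈ range T, K := by
        gcongr
        exact (abs_sum_le_sum_abs _ _).trans (sum_le_sum fun t ht => h t (mem_range.1 ht))
    _ = K := by field_simp; simp

lemma cesaroMean_sub (a b : ℕ → ℝ) (T : ℕ) :
    cesaroMean (fun t => a t - b t) T = cesaroMean a T - cesaroMean b T := by
  simp only [cesaroMean, sum_sub_distrib, mul_sub]

lemma cesaroMean_const {T : ℕ} (hT : 0 < T) (c : ℝ) : cesaroMean (fun _ => c) T = c := by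
  simp [cesaroMean]; field_simp

section Cesaro

variable {E : Type*} [AddCommGroup E] [Module ℝ E] (P : E →ₗ[ℝ] E) (f : E →ₗ[ℝ] ℝ)

lemma sub_apply_iterate_eq_sum (y : E) (s : ℕ) :
    f y - f (P^[s] y) = ∑ r ∈ range s, f (P^[r] (y - P y)) := by
  simp_rw [← Module.End.pow_apply, map_sub, Module.End.pow_apply,
    ← Function.iterate_succ_apply]
  exact (sum_range_sub' (fun r => f (P^[r] y)) s).symm

variable {P} {Q : E → E} {α : ℝ}

lemma sum_iterate_sub_apply_sum_iterate (hQ : ∀ x, x - Q x = α • (x - P x)) (hα : α ≠ 0)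
    (μ : E) (T : ℕ) :
    (∑ t ∈ range T, Q^[t] μ) - P (∑ t ∈ range T, Q^[t] μ) = α⁻¹ • (μ - Q^[T] μ) := by
  have hstep : ∀ x, x - P x = α⁻¹ • (x - Q x) := fun x => by rw [hQ, inv_smul_smul₀ hα]
  calc _ = ∑ t ∈ range T, α⁻¹ • (Q^[t] μ - Q^[t + 1] μ) := by
        rw [map_sum, ← sum_sub_distrib]
        exact sum_congr rfl fun t _ => by rw [hstep, Function.iterate_succ_apply']
    _ = α⁻¹ • (μ - Q^[T] μ) := by rw [← smul_sum, sum_range_sub' (fun t => Q^[t] μ)]; rfl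

lemma abs_sum_sub_sum_iterate_le (hQ : ∀ x, x - Q x = α • (x - P x)) (hα : α ≠ 0)
    {D : Set E} (hPD : Set.MapsTo P D D) (hQD : Set.MapsTo Q D D) {M : ℝ} (hM : ∀ x ∈ D, |f x| ≤ M)
    {μ : E} (hμ : μ ∈ D) (s T : ℕ) :
    |∑ t ∈ range T, f (Q^[t] μ) - ∑ t ∈ range T, f (P^[s] (Q^[t] μ))| ≤ s * (2 * M * |α|⁻¹) := by
  have hterm : ∀ r, |f (P^[r] (α⁻¹ • (μ - Q^[T] μ)))| ≤ 2 * M * |α|⁻¹ := fun r => by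
    have h1 := hM _ (hPD.iterate r hμ)
    have h2 := hM _ (hPD.iterate r (hQD.iterate T hμ))
    rw [← Module.End.pow_apply, map_smul, map_sub, map_smul, map_sub, Module.End.pow_apply,
      Module.End.pow_apply, smul_eq_mul, abs_mul, abs_inv, mul_comm]
    gcongr
    linarith [abs_sub (f (P^[r] μ)) (f (P^[r] (Q^[T] μ)))]
  calc _ = |∑ r ∈ range s, f (P^[r] (α⁻¹ • (μ - Q^[T] μ)))| := by
        rw [← sum_iterate_sub_apply_sum_iterate hQ hα, ← sub_apply_iterate_eq_sum, map_sum,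
          ← Module.End.pow_apply, map_sum, map_sum]
        simp_rw [Module.End.pow_apply]
    _ ≤ ∑ r ∈ range s, 2 * M * |α|⁻¹ :=
        (abs_sum_le_sum_abs _ _).trans (sum_le_sum fun r _ => hterm r)
    _ = s * (2 * M * |α|⁻¹) := by simp

lemma abs_sum_sub_sum_cesaroMean_le (hQ : ∀ x, x - Q x = α • (x - P x)) (hα : α ≠ 0)
    {D : Set E} (hPD : Set.MapsTo P D D) (hQD : Set.MapsTo Q D D) {M : ℝ} (hM : ∀ x ∈ D, |f x| ≤ M)
    {μ : E} (hμ : μ ∈ D) {S : ℕ} (hS : 0 < S) (T : ℕ) :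
    |∑ t ∈ range T, f (Q^[t] μ) - ∑ t ∈ range T, cesaroMean (fun s => f (P^[s] (Q^[t] μ))) S|
      ≤ S * (2 * M * |α|⁻¹) := by
  have hM0 : 0 ≤ M := (abs_nonneg _).trans (hM μ hμ)
  have hmean : ∑ t ∈ range T, f (Q^[t] μ)
        - ∑ t ∈ range T, cesaroMean (fun s => f (P^[s] (Q^[t] μ))) S
      = cesaroMean (fun s =>
          ∑ t ∈ range T, f (Q^[t] μ) - ∑ t ∈ range T, f (P^[s] (Q^[t] μ))) S := by
    rw [cesaroMean_sub, cesaroMean_const hS]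
    simp only [cesaroMean, ← mul_sum]
    rw [sum_comm]
  rw [hmean]
  refine abs_cesaroMean_le (fun s hs => ?_) (by positivity)
  refine (abs_sum_sub_sum_iterate_le f hQ hα hPD hQD hM hμ s T).trans ?_
  gcongr

theorem tendsto_cesaroMean_of_sub_eq_smul_sub (hQ : ∀ x, x - Q x = α • (x - P x)) (hα : α ≠ 0)
    {D : Set E} (hPD : Set.MapsTo P D D) (hQD : Set.MapsTo Q D D) {M : ℝ} (hM : ∀ x ∈ D, |f x| ≤ M)
    {g : ℝ} (hg : TendstoUniformlyOn (fun S x => cesaroMean (fun s => f (P^[s] x)) S)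
      (fun _ => g) atTop D) {μ : E} (hμ : μ ∈ D) :
    Tendsto (cesaroMean fun t => f (Q^[t] μ)) atTop (𝓝 g) := by
  rw [Metric.tendsto_atTop]
  intro ε hε
  obtain ⟨S, hSg, hS⟩ := ((Metric.tendstoUniformlyOn_iff.1 hg (ε / 2) (half_pos hε)).and
    (eventually_gt_atTop 0)).exists
  set C := S * (2 * M * |α|⁻¹)
  obtain ⟨T₀, hT₀⟩ := exists_nat_gt (2 * C / ε)
  refine ⟨T₀ + 1, fun T hT => ?_⟩
  have hTpos : (0 : ℝ) < T := by exact_mod_cast (Nat.succ_pos T₀).trans_le hT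
  set b : ℕ → ℝ := fun t => cesaroMean (fun s => f (P^[s] (Q^[t] μ))) S
  have hsplit : cesaroMean (fun t => f (Q^[t] μ)) T - g
      = cesaroMean (fun t => f (Q^[t] μ) - b t) T + cesaroMean (fun t => b t - g) T := by
    rw [cesaroMean_sub, cesaroMean_sub, cesaroMean_const (by exact_mod_cast hTpos)]
    ring
  have hfirst : |cesaroMean (fun t => f (Q^[t] μ) - b t) T| < ε / 2 := by
    rw [cesaroMean, sum_sub_distrib, abs_mul, abs_of_pos (by positivity)]
    calc 1 / (T : ℝ) * |_| ≤ 1 / T * C := by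
          gcongr; exact abs_sum_sub_sum_cesaroMean_le f hQ hα hPD hQD hM hμ hS T
      _ < ε / 2 := by
          rw [div_mul_eq_mul_div, one_mul, div_lt_iff₀ hTpos]
          rw [div_lt_iff₀ hε] at hT₀
          have : (T₀ : ℝ) + 1 ≤ T := by exact_mod_cast hT
          nlinarith
  have hsecond : |cesaroMean (fun t => b t - g) T| ≤ ε / 2 :=
    abs_cesaroMean_le (fun t _ => by
      rw [abs_sub_comm]; exact (hSg _ (hQD.iterate t hμ)).le) (half_pos hε).le
  rw [Real.dist_eq, hsplit]
  exact (abs_add_le _ _).trans_lt (by linarith)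

end Cesaro

def rangeSimplex (B : ℕ) : Set (ℕ → ℝ) :=
  {μ | (∀ w, 0 ≤ μ w) ∧ (∀ w, B ≤ w → μ w = 0) ∧ ∑ w ∈ range B, μ w = 1}

section rangeSimplex

variable {B : ℕ}

lemma convex_rangeSimplex : Convex ℝ (rangeSimplex B) := by
  rintro μ ⟨hμ0, hμB, hμ1⟩ ν ⟨hν0, hνB, hν1⟩ a b ha hb hab
  refine ⟨fun w => ?_, fun w hw => ?_, ?_⟩
  · simp only [Pi.add_apply, Pi.smul_apply, smul_eq_mul]
    exact add_nonneg (mul_nonneg ha (hμ0 w)) (mul_nonneg hb (hν0 w))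
  · simp [hμB w hw, hνB w hw]
  · simp [sum_add_distrib, ← mul_sum, hμ1, hν1, hab]

lemma eq_sum_single_of_mem_rangeSimplex {μ : ℕ → ℝ} (hμ : μ ∈ rangeSimplex B) :
    μ = ∑ w ∈ range B, μ w • Pi.single w 1 := by
  ext w
  simp only [Finset.sum_apply, Pi.smul_apply, Pi.single_apply, smul_eq_mul, mul_ite, mul_one,
    mul_zero, sum_ite_eq, Finset.mem_range]
  split_ifs with hw
  · rfl
  · exact hμ.2.1 w (not_lt.1 hw)

lemma single_mem_rangeSimplex {w : ℕ} (hw : w < B) : (Pi.single w 1 : ℕ → ℝ) ∈ rangeSimplex B := by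
  refine ⟨fun v => ?_, fun v hv => ?_, ?_⟩
  · by_cases h : v = w <;> simp [h]
  · simp [show v ≠ w by omega]
  · simp [sum_pi_single', hw]

theorem tendstoUniformlyOn_rangeSimplex {ι : Type*} {l : Filter ι} (F : ι → (ℕ → ℝ) →ₗ[ℝ] ℝ)
    {g : ℝ} (h : ∀ w < B, Tendsto (fun i => F i (Pi.single w 1)) l (𝓝 g)) :
    TendstoUniformlyOn (fun i => ⇑(F i)) (fun _ => g) l (rangeSimplex B) := by
  rw [Metric.tendstoUniformlyOn_iff]
  intro ε hε
  have hnear : ∀ᶠ i in l, ∀ w ∈ range B, |g - F i (Pi.single w 1)| < ε / 2 :=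
    (eventually_all_finset _).2 fun w hw => by
      simpa [Real.dist_eq, abs_sub_comm] using
        Metric.tendsto_nhds.1 (h w (mem_range.1 hw)) (ε / 2) (half_pos hε)
  filter_upwards [hnear] with i hi μ hμ
  have hsum : g - F i μ = ∑ w ∈ range B, μ w * (g - F i (Pi.single w 1)) := by
    conv_lhs => rw [eq_sum_single_of_mem_rangeSimplex hμ]
    simp only [map_sum, map_smul, smul_eq_mul, mul_sub, sum_sub_distrib, ← sum_mul, hμ.2.2,
      one_mul]
  rw [Real.dist_eq, hsum]
  calc |∑ w ∈ range B, μ w * (g - F i (Pi.single w 1))|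
      ≤ ∑ w ∈ range B, μ w * (ε / 2) := by
        refine (abs_sum_le_sum_abs _ _).trans (sum_le_sum fun w hw => ?_)
        rw [abs_mul, abs_of_nonneg (hμ.1 w)]
        exact mul_le_mul_of_nonneg_left (hi w hw).le (hμ.1 w)
    _ < ε := by rw [← sum_mul, hμ.2.2]; linarith

end rangeSimplex

section SingleReel

variable {B : ℕ} {p : ℕ → ℝ}

lemma reelE_lt {w x : ℕ} (hw : w < B) (hx : x ∈ Icc 1 B) : reelE B w x < B := by
  rw [mem_Icc] at hx
  unfold reelE
  split_ifs <;> omega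

variable (B p) in
noncomputable def step1L : (ℕ → ℝ) →ₗ[ℝ] (ℕ → ℝ) where
  toFun := step1 B p
  map_add' μ ν := by
    ext w'
    simp only [step1, Pi.add_apply, add_mul, sum_add_distrib]
  map_smul' c μ := by
    ext w'
    simp only [step1, Pi.smul_apply, smul_eq_mul, RingHom.id_apply, mul_sum, mul_assoc]

variable (B p) in
noncomputable def ec1L : (ℕ → ℝ) →ₗ[ℝ] ℝ where
  toFun := ec1 B p
  map_add' μ ν := by simp only [ec1, Pi.add_apply, add_mul, sum_add_distrib]
  map_smul' c μ := by
    simp only [ec1, Pi.smul_apply, smul_eq_mul, RingHom.id_apply, mul_sum, mul_assoc]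

lemma step1_eq_zero_of_le (μ : ℕ → ℝ) {w' : ℕ} (hw' : B ≤ w') : step1 B p μ w' = 0 :=
  sum_eq_zero fun w hw => by
    have hne : ∀ x ∈ Icc 1 B, reelE B w x ≠ w' := fun x hx =>
      ((reelE_lt (mem_range.1 hw) hx).trans_le hw').ne
    rw [filter_false_of_mem hne, sum_empty, mul_zero]

lemma step1_nonneg (hp0 : ∀ x ∈ Icc 1 B, 0 ≤ p x) {μ : ℕ → ℝ} (hμ : ∀ w, 0 ≤ μ w) (w' : ℕ) :
    0 ≤ step1 B p μ w' :=
  sum_nonneg fun w _ => mul_nonneg (hμ w) (sum_nonneg fun x hx => hp0 x (mem_filter.1 hx).1)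

lemma sum_step1 (hp1 : ∑ x ∈ Icc 1 B, p x = 1) (μ : ℕ → ℝ) :
    ∑ w' ∈ range B, step1 B p μ w' = ∑ w ∈ range B, μ w := by
  unfold step1
  rw [sum_comm]
  refine sum_congr rfl fun w hw => ?_
  rw [← mul_sum, sum_fiberwise_of_maps_to fun x hx => mem_range.2 (reelE_lt (mem_range.1 hw) hx),
    hp1, mul_one]

lemma mapsTo_step1_rangeSimplex (hp0 : ∀ x ∈ Icc 1 B, 0 ≤ p x) (hp1 : ∑ x ∈ Icc 1 B, p x = 1) :
    Set.MapsTo (step1 B p) (rangeSimplex B) (rangeSimplex B) := fun _ ⟨hμ0, _, hμ1⟩ =>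
  ⟨step1_nonneg hp0 hμ0, fun _ => step1_eq_zero_of_le _, by rw [sum_step1 hp1, hμ1]⟩

lemma abs_ec1_le (hp0 : ∀ x ∈ Icc 1 B, 0 ≤ p x) (hp1 : ∑ x ∈ Icc 1 B, p x = 1) {μ : ℕ → ℝ}
    (hμ : μ ∈ rangeSimplex B) : |ec1 B p μ| ≤ B := by
  have hcost : ∀ w ∈ range B, ∀ x, reelC w x ∈ Set.Icc (0 : ℝ) B := fun w hw x => by
    have : (w : ℝ) ≤ B := by exact_mod_cast (mem_range.1 hw).le
    unfold reelC; split_ifs <;> constructor <;> first | positivity | linarith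
  have hexp : ∀ w ∈ range B, ∑ x ∈ Icc 1 B, p x * reelC w x ∈ Set.Icc (0 : ℝ) B := fun w hw =>
    ⟨sum_nonneg fun x hx => mul_nonneg (hp0 x hx) (hcost w hw x).1,
      (sum_le_sum fun x hx => mul_le_mul_of_nonneg_left (hcost w hw x).2 (hp0 x hx)).trans_eq
        (by rw [← sum_mul, hp1, one_mul])⟩
  rw [abs_le]
  constructor
  · have : 0 ≤ ec1 B p μ := sum_nonneg fun w hw => mul_nonneg (hμ.1 w) (hexp w hw).1
    linarith [(Nat.cast_nonneg B : (0 : ℝ) ≤ B)]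
  · calc ec1 B p μ ≤ ∑ w ∈ range B, μ w * B :=
          sum_le_sum fun w hw => mul_le_mul_of_nonneg_left (hexp w hw).2 (hμ.1 w)
      _ = B := by rw [← sum_mul, hμ.2.2, one_mul]

end SingleReel

section LazyReel

variable {B : ℕ} {p : ℕ → ℝ} {α : ℝ}

variable (B p α) in
noncomputable def lazyStep1 (μ : ℕ → ℝ) : ℕ → ℝ := (1 - α) • μ + α • step1 B p μ

lemma sub_lazyStep1 (μ : ℕ → ℝ) : μ - lazyStep1 B p α μ = α • (μ - step1L B p μ) := by
  change μ - ((1 - α) • μ + α • step1 B p μ) = α • (μ - step1 B p μ)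
  module

lemma mapsTo_lazyStep1_rangeSimplex (hp0 : ∀ x ∈ Icc 1 B, 0 ≤ p x)
    (hp1 : ∑ x ∈ Icc 1 B, p x = 1) (hα0 : 0 ≤ α) (hα1 : α ≤ 1) :
    Set.MapsTo (lazyStep1 B p α) (rangeSimplex B) (rangeSimplex B) := fun _ hμ =>
  convex_rangeSimplex hμ (mapsTo_step1_rangeSimplex hp0 hp1 hμ) (by linarith) hα0 (by ring)

theorem tendsto_cesaroMean_ec1_lazyStep1 (hp0 : ∀ x ∈ Icc 1 B, 0 ≤ p x)
    (hp1 : ∑ x ∈ Icc 1 B, p x = 1) (hα0 : 0 < α) (hα1 : α ≤ 1) {g : ℝ}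
    (hg : ∀ w < B, Tendsto (cesaroMean fun t => ec1 B p ((step1 B p)^[t] (Pi.single w 1)))
      atTop (𝓝 g))
    {μ : ℕ → ℝ} (hμ : μ ∈ rangeSimplex B) :
    Tendsto (cesaroMean fun t => ec1 B p ((lazyStep1 B p α)^[t] μ)) atTop (𝓝 g) := by
  set F : ℕ → (ℕ → ℝ) →ₗ[ℝ] ℝ :=
    fun S => (1 / (S : ℝ)) • ∑ s ∈ range S, ec1L B p ∘ₗ step1L B p ^ s with hF
  have hFapply : ∀ S μ, F S μ = cesaroMean (fun s => ec1 B p ((step1 B p)^[s] μ)) S :=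
    fun S μ => by
      simp only [hF, LinearMap.smul_apply, LinearMap.sum_apply,
        LinearMap.comp_apply, Module.End.pow_apply, smul_eq_mul, cesaroMean]
      rfl
  have hunif := tendstoUniformlyOn_rangeSimplex F fun w hw =>
    (hg w hw).congr fun S => (hFapply S _).symm
  rw [show (fun S => ⇑(F S)) = _ from funext fun S => funext (hFapply S)] at hunif
  exact tendsto_cesaroMean_of_sub_eq_smul_sub (ec1L B p) sub_lazyStep1 hα0.ne'
    (mapsTo_step1_rangeSimplex hp0 hp1) (mapsTo_lazyStep1_rangeSimplex hp0 hp1 hα0.le hα1)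
    (fun _ hx => abs_ec1_le hp0 hp1 hx) hunif hμ

end LazyReel

section NReel

variable {B N : ℕ} {p : ℕ → ℝ}

local notation "reelStates" => Fintype.piFinset fun _ : Fin N => range B

variable (B N) in
noncomputable def reelMarginal (ν : (Fin N → ℕ) → ℝ) (n : Fin N) : ℕ → ℝ :=
  fun w => ∑ s ∈ reelStates with s n = w, ν s

lemma sum_reelMarginal_mul (ν : (Fin N → ℕ) → ℝ) (n : Fin N) (h : ℕ → ℝ) :
    ∑ w ∈ range B, reelMarginal B N ν n w * h w = ∑ s ∈ reelStates, ν s * h (s n) := by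
  rw [← sum_fiberwise_of_maps_to fun s hs => Fintype.mem_piFinset.1 hs n]
  refine sum_congr rfl fun w _ => ?_
  rw [reelMarginal, sum_mul]
  exact sum_congr rfl fun s hs => by rw [(mem_filter.1 hs).2]

lemma reelMarginal_mem_rangeSimplex {ν : (Fin N → ℕ) → ℝ} (hν0 : ∀ s, 0 ≤ ν s)
    (hν1 : ∑ s ∈ reelStates, ν s = 1) (n : Fin N) : reelMarginal B N ν n ∈ rangeSimplex B := by
  refine ⟨fun w => sum_nonneg fun s _ => hν0 s, fun w hw => sum_eq_zero fun s hs => ?_, ?_⟩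
  · obtain ⟨hs', rfl⟩ := mem_filter.1 hs
    exact absurd (mem_range.1 (Fintype.mem_piFinset.1 hs' n)) (not_lt.2 hw)
  · simpa [hν1] using sum_reelMarginal_mul (B := B) ν n fun _ => 1

lemma ecN_eq_mean_ec1_reelMarginal (ν : (Fin N → ℕ) → ℝ) :
    ecN B N p ν = 1 / (N : ℝ) * ∑ n, ec1 B p (reelMarginal B N ν n) := by
  have hmarg : ∀ n, ec1 B p (reelMarginal B N ν n)
      = ∑ s ∈ reelStates, ν s * ∑ x ∈ Icc 1 B, p x * reelC (s n) x :=
    fun n => sum_reelMarginal_mul ν n _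
  simp only [hmarg, ecN, mul_sum]
  rw [sum_comm]
  exact sum_congr rfl fun n _ => sum_congr rfl fun s _ => sum_congr rfl fun x _ => by ring

lemma update_reelE_mem {s : Fin N → ℕ} (hs : s ∈ reelStates) (m : Fin N) {x : ℕ}
    (hx : x ∈ Icc 1 B) : Function.update s m (reelE B (s m) x) ∈ reelStates := by
  have hsB : ∀ i, s i < B := fun i => mem_range.1 (Fintype.mem_piFinset.1 hs i)
  refine Fintype.mem_piFinset.2 fun i => mem_range.2 ?_
  rcases eq_or_ne i m with rfl | hi
  · simpa using reelE_lt (hsB i) hx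
  · simpa [hi] using hsB i

lemma sum_marginal_update_reelE {s : Fin N → ℕ} (hs : s ∈ reelStates) (m n : Fin N) (w' : ℕ) :
    ∑ s' ∈ reelStates with s' n = w',
        ∑ x ∈ Icc 1 B with Function.update s m (reelE B (s m) x) = s', p x
      = ∑ x ∈ Icc 1 B with Function.update s m (reelE B (s m) x) n = w', p x := by
  rw [sum_fiberwise_eq_sum_filter]
  refine sum_congr (filter_congr fun x hx => ?_) fun _ _ => rfl
  rw [mem_filter, and_iff_right_of_imp fun _ => update_reelE_mem hs m hx]

lemma sum_update_reelE (hp1 : ∑ x ∈ Icc 1 B, p x = 1) (s : Fin N → ℕ) (n : Fin N) (w' : ℕ) :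
    ∑ m, ∑ x ∈ Icc 1 B with Function.update s m (reelE B (s m) x) n = w', p x
      = ((N : ℝ) - 1) * (if s n = w' then 1 else 0)
        + ∑ x ∈ Icc 1 B with reelE B (s n) x = w', p x := by
  have hother : ∀ m ∈ univ.erase n,
      ∑ x ∈ Icc 1 B with Function.update s m (reelE B (s m) x) n = w', p x
        = if s n = w' then 1 else 0 := fun m hm => by
    simp only [Function.update_of_ne (ne_of_mem_erase hm).symm]
    split_ifs with h
    · rw [filter_true_of_mem fun _ _ => h, hp1]
    · rw [filter_false_of_mem fun _ _ => h, sum_empty]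
  rw [← add_sum_erase _ _ (mem_univ n), sum_congr rfl hother, sum_const,
    card_erase_of_mem (mem_univ n), card_univ, Fintype.card_fin, nsmul_eq_mul,
    Nat.cast_sub n.pos, Nat.cast_one]
  simp only [Function.update_self]
  ring

lemma reelMarginal_stepN (hp1 : ∑ x ∈ Icc 1 B, p x = 1) (ν : (Fin N → ℕ) → ℝ) (n : Fin N) :
    reelMarginal B N (stepN B N p ν) n = lazyStep1 B p (1 / N) (reelMarginal B N ν n) := by
  ext w'
  have hN : (N : ℝ) ≠ 0 := Nat.cast_ne_zero.2 n.pos.ne'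
  have hmarg : reelMarginal B N ν n w' = ∑ s ∈ reelStates, if s n = w' then ν s else 0 :=
    sum_filter _ _
  have hstep : step1 B p (reelMarginal B N ν n) w'
      = ∑ s ∈ reelStates, ν s * ∑ x ∈ Icc 1 B with reelE B (s n) x = w', p x :=
    sum_reelMarginal_mul ν n _
  calc reelMarginal B N (stepN B N p ν) n w'
      = ∑ s ∈ reelStates, ν s * (1 / N * ∑ m, ∑ s' ∈ reelStates with s' n = w',
          ∑ x ∈ Icc 1 B with Function.update s m (reelE B (s m) x) = s', p x) := by
        unfold reelMarginal stepN
        rw [sum_comm]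
        refine sum_congr rfl fun s _ => ?_
        rw [← mul_sum, ← mul_sum, sum_comm]
    _ = ∑ s ∈ reelStates, ν s * (1 / N * (((N : ℝ) - 1) * (if s n = w' then 1 else 0)
          + ∑ x ∈ Icc 1 B with reelE B (s n) x = w', p x)) := by
        refine sum_congr rfl fun s hs => ?_
        simp only [sum_marginal_update_reelE hs, sum_update_reelE hp1]
    _ = lazyStep1 B p (1 / N) (reelMarginal B N ν n) w' := by
        simp only [lazyStep1, Pi.add_apply, Pi.smul_apply, smul_eq_mul]
        rw [hmarg, hstep, mul_sum, mul_sum, ← sum_add_distrib]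
        refine sum_congr rfl fun s _ => ?_
        split_ifs <;> field_simp
        ring

lemma reelMarginal_iterate_stepN (hp1 : ∑ x ∈ Icc 1 B, p x = 1)
    (ν : (Fin N → ℕ) → ℝ) (n : Fin N) (t : ℕ) :
    reelMarginal B N ((stepN B N p)^[t] ν) n
      = (lazyStep1 B p (1 / N))^[t] (reelMarginal B N ν n) :=
  Function.Semiconj.iterate_right (f := fun ν => reelMarginal B N ν n)
    (fun ν => reelMarginal_stepN hp1 ν n) t ν

end NReel

theorem naive_N_reel_gain_eq_single_reel_gain_general
    (B N : ℕ) (hN : 0 < N) (p : ℕ → ℝ)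
    (hp0 : ∀ x ∈ Icc 1 B, 0 ≤ p x) (hp1 : ∑ x ∈ Icc 1 B, p x = 1)
    (g1 : ℝ)
    (hg1 : ∀ μ0 : ℕ → ℝ, (∀ w, 0 ≤ μ0 w) → (∀ w, B ≤ w → μ0 w = 0) →
      (∑ w ∈ range B, μ0 w = 1) →
      Filter.Tendsto
        (fun T : ℕ => (1 / (T : ℝ)) * ∑ t ∈ range T, ec1 B p ((step1 B p)^[t] μ0))
        Filter.atTop (nhds g1))
    (ν0 : (Fin N → ℕ) → ℝ) (hν0 : ∀ s, 0 ≤ ν0 s)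
    (hν1 : ∑ s ∈ Fintype.piFinset (fun _ : Fin N => range B), ν0 s = 1) :
    Filter.Tendsto
      (fun T : ℕ => (1 / (T : ℝ)) * ∑ t ∈ range T, ecN B N p ((stepN B N p)^[t] ν0))
      Filter.atTop (nhds g1) := by
  have hN' : (0 : ℝ) < N := Nat.cast_pos.2 hN
  have hreel : ∀ n, Tendsto (cesaroMean fun t =>
      ec1 B p ((lazyStep1 B p (1 / N))^[t] (reelMarginal B N ν0 n))) atTop (𝓝 g1) :=
    fun n => tendsto_cesaroMean_ec1_lazyStep1 hp0 hp1 (by positivity)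
      (div_le_one_of_le₀ (by exact_mod_cast hN) hN'.le)
      (fun w hw => by
        obtain ⟨h0, hB, h1⟩ := single_mem_rangeSimplex hw
        exact hg1 _ h0 hB h1)
      (reelMarginal_mem_rangeSimplex hν0 hν1 n)
  have hmean : ∀ T : ℕ, 1 / (T : ℝ) * ∑ t ∈ range T, ecN B N p ((stepN B N p)^[t] ν0)
      = 1 / (N : ℝ) * ∑ n, cesaroMean (fun t =>
          ec1 B p ((lazyStep1 B p (1 / N))^[t] (reelMarginal B N ν0 n))) T := by
    intro T
    simp only [ecN_eq_mean_ec1_reelMarginal, reelMarginal_iterate_stepN hp1, cesaroMean,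
      ← mul_sum]
    rw [sum_comm]
    ring
  simp only [hmean]
  convert (tendsto_finsetSum univ fun n _ => hreel n).const_mul (1 / (N : ℝ))
  rw [sum_const, card_univ, Fintype.card_fin, nsmul_eq_mul]
  field_simp

/-- if every single-reel Markov reward process (from any initial
distribution) has long-run average cost `g₁`, then the naive `N`-reel Markov
reward process under the random policy has the same long-run average cost
`g₁`, from any initial distribution; in particular the long-run average cost
is independent of `N`. -/
theorem naive_N_reel_gain_eq_single_reel_gain
    (B N : ℕ) (hB : 0 < B) (hN : 0 < N) (p : ℕ → ℝ)
    (hp0 : ∀ x ∈ Icc 1 B, 0 ≤ p x) (hp1 : ∑ x ∈ Icc 1 B, p x = 1)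
    (g1 : ℝ)
    (hg1 : ∀ μ0 : ℕ → ℝ, (∀ w, 0 ≤ μ0 w) → (∀ w, B ≤ w → μ0 w = 0) →
      (∑ w ∈ range B, μ0 w = 1) →
      Filter.Tendsto
        (fun T : ℕ => (1 / (T : ℝ)) * ∑ t ∈ range T, ec1 B p ((step1 B p)^[t] μ0))
        Filter.atTop (nhds g1))
    (ν0 : (Fin N → ℕ) → ℝ) (hν0 : ∀ s, 0 ≤ ν0 s)
    (hν0supp : ∀ s : Fin N → ℕ, (∃ n, B ≤ s n) → ν0 s = 0)
    (hν1 : ∑ s ∈ Fintype.piFinset (fun _ : Fin N => range B), ν0 s = 1) :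
    Filter.Tendsto
      (fun T : ℕ => (1 / (T : ℝ)) * ∑ t ∈ range T, ecN B N p ((stepN B N p)^[t] ν0))
      Filter.atTop (nhds g1) :=
  naive_N_reel_gain_eq_single_reel_gain_general B N hN p hp0 hp1 g1 hg1 ν0 hν0 hν1
end

section
/- Suppose h_1 : W → ℝ and g_1 ∈ ℝ satisfy the single-reel Bellman equation h_1(w) = -g_1 + Σ_x p(x)·(c(w,x) + h_1(e(w,x))) for all w in W. Then the function h_N(w_1,...,w_N) := Σ_{n=1}^N h_1(w_n), together with gain g_N := g_1, satisfies the naive N-reel Bellman equation under the random policy: h_N(w_1,...,w_N) = -g_N + (1/N)·Σ_{n=1}^N Σ_x p(x)·(c(w_n,x) + h_N(w_1,..., e(w_n,x), ..., w_N)) for all (w_1,...,w_N) in W^N. -/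
/-! Replacing one reel changes the additive bias `Σ_m h₁(w_m)` only in that reel's term, so each
selected reel contributes the single-reel Bellman right-hand side plus the bias of the other reels,
i.e. `g₁ + h_N(w)` in total; averaging over the `N` equally likely reels gives the claim. -/

open Finset

theorem Finset.sum_comp_update {ι α M : Type*} [Fintype ι] [DecidableEq ι] [AddCommGroup M]
    (f : α → M) (s : ι → α) (n : ι) (a : α) :
    ∑ m, f (Function.update s n a m) = ∑ m, f (s m) - f (s n) + f a := by
  simp_rw [Function.apply_update (fun _ => f), sum_update_of_mem (mem_univ n),
    ← sum_erase_add _ _ (mem_univ n), sdiff_singleton_eq_erase]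
  abel

theorem Finset.sum_mul_add_const_of_sum_eq_one {α : Type*} {X : Finset α} {p : α → ℝ}
    (hp : ∑ x ∈ X, p x = 1) (f : α → ℝ) (K : ℝ) :
    ∑ x ∈ X, p x * (f x + K) = ∑ x ∈ X, p x * f x + K := by
  simp_rw [mul_add, sum_add_distrib, ← sum_mul, hp, one_mul]

theorem reel_expectation_update_eq {B N : ℕ} {p : ℕ → ℝ} (hp1 : ∑ x ∈ Icc 1 B, p x = 1)
    {h1 : ℕ → ℝ} {g1 : ℝ} (s : Fin N → ℕ) (n : Fin N)
    (hBellman : h1 (s n) = -g1 + ∑ x ∈ Icc 1 B, p x * (reelC (s n) x + h1 (reelE B (s n) x))) :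
    ∑ x ∈ Icc 1 B, p x *
        (reelC (s n) x + ∑ m : Fin N, h1 (Function.update s n (reelE B (s n) x) m)) =
      g1 + ∑ m : Fin N, h1 (s m) := by
  have hsplit : ∀ x, reelC (s n) x + ∑ m, h1 (Function.update s n (reelE B (s n) x) m) =
      (reelC (s n) x + h1 (reelE B (s n) x)) + (∑ m, h1 (s m) - h1 (s n)) := fun x => by
    rw [sum_comp_update]; ring
  simp_rw [hsplit, sum_mul_add_const_of_sum_eq_one hp1]
  linarith

theorem naive_N_reel_bias_decomposition_general
    (B N : ℕ) (hN : 0 < N) (p : ℕ → ℝ)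
    (hp1 : ∑ x ∈ Icc 1 B, p x = 1)
    (h1 : ℕ → ℝ) (g1 : ℝ)
    (hBellman : ∀ w < B,
      h1 w = -g1 + ∑ x ∈ Icc 1 B, p x * (reelC w x + h1 (reelE B w x))) :
    ∀ s : Fin N → ℕ, (∀ n, s n < B) →
      (∑ n : Fin N, h1 (s n)) =
        -g1 + (1 / (N : ℝ)) * ∑ n : Fin N, ∑ x ∈ Icc 1 B, p x *
          (reelC (s n) x +
            ∑ m : Fin N, h1 (Function.update s n (reelE B (s n) x) m)) := by
  intro s hs
  simp_rw [fun n => reel_expectation_update_eq hp1 s n (hBellman (s n) (hs n)), sum_const,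
    card_univ, Fintype.card_fin, nsmul_eq_mul]
  have hN' : (N : ℝ) ≠ 0 := by exact_mod_cast hN.ne'
  field_simp
  ring

/-- Theorem 1: if `(g₁, h₁)` solves the single-reel Bellman
equation, then `h_N(w₁,...,w_N) := Σ_n h₁(w_n)` together with gain `g₁`
solves the naive `N`-reel Bellman equation under the random policy. -/
theorem naive_N_reel_bias_decomposition
    (B N : ℕ) (hB : 0 < B) (hN : 0 < N) (p : ℕ → ℝ)
    (hp0 : ∀ x ∈ Icc 1 B, 0 ≤ p x) (hp1 : ∑ x ∈ Icc 1 B, p x = 1)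
    (h1 : ℕ → ℝ) (g1 : ℝ)
    (hBellman : ∀ w < B,
      h1 w = -g1 + ∑ x ∈ Icc 1 B, p x * (reelC w x + h1 (reelE B w x))) :
    ∀ s : Fin N → ℕ, (∀ n, s n < B) →
      (∑ n : Fin N, h1 (s n)) =
        -g1 + (1 / (N : ℝ)) * ∑ n : Fin N, ∑ x ∈ Icc 1 B, p x *
          (reelC (s n) x +
            ∑ m : Fin N, h1 (Function.update s n (reelE B (s n) x) m)) :=
  naive_N_reel_bias_decomposition_general B N hN p hp1 h1 g1 hBellman
end

section
/- If the component weight is deterministic, p(x₀) = 1, and x₀ does not divide B, then g_1 = (B mod x₀)/⌊B/x₀⌋ and h_1 defined by h_1(w) = (w mod x₀) - g_1·⌊w/x₀⌋ satisfy the single-reel Bellman equation h_1(w) = -g_1 + c(w,x₀) + h_1(e(w,x₀)) for all w ∈ {0,...,B-1}. -/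
open Finset

lemma sub_mod_self_eq (w x : ℕ) (h : x ≤ w) : (w - x) % x = w % x := by
  conv_rhs => rw [← Nat.sub_add_cancel h]
  rw [Nat.add_mod_right]

lemma sub_div_self_eq (w x : ℕ) (hx : 0 < x) (h : x ≤ w) : (w - x) / x = w / x - 1 := by
  conv_rhs => rw [← Nat.sub_add_cancel h]
  rw [Nat.add_div_right _ hx]
  simp

/-- with deterministic component weight `x₀` not dividing `B`,
the gain `g₁ = (B mod x₀)/⌊B/x₀⌋` together with the bias
`h₁(w) = (w mod x₀) - g₁·⌊w/x₀⌋` solves the single-reel Bellman equation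
`h₁(w) = -g₁ + c(w,x₀) + h₁(e(w,x₀))` for all `w ∈ {0,...,B-1}`. -/
theorem deterministic_not_divisible_gain
    (B x₀ : ℕ) (hB : 0 < B) (hx1 : 1 ≤ x₀) (hxB : x₀ ≤ B) (hndvd : ¬ x₀ ∣ B) :
    ∀ w < B,
      ((w % x₀ : ℕ) : ℝ) - ((B % x₀ : ℕ) : ℝ) / ((B / x₀ : ℕ) : ℝ) * ((w / x₀ : ℕ) : ℝ) =
        -(((B % x₀ : ℕ) : ℝ) / ((B / x₀ : ℕ) : ℝ)) + reelC w x₀ +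
          (((reelE B w x₀ % x₀ : ℕ) : ℝ) -
            ((B % x₀ : ℕ) : ℝ) / ((B / x₀ : ℕ) : ℝ) * ((reelE B w x₀ / x₀ : ℕ) : ℝ)) := by
  intro w hw
  have hx0 : 0 < x₀ := hx1
  have hk : 1 ≤ B / x₀ := (Nat.one_le_div_iff hx0).mpr hxB
  have hkR : ((B / x₀ : ℕ) : ℝ) ≠ 0 := by positivity
  by_cases h : x₀ ≤ w
  · have hwq : 1 ≤ w / x₀ := (Nat.one_le_div_iff hx0).mpr h
    simp only [reelE, reelC, if_pos h, sub_mod_self_eq w x₀ h, sub_div_self_eq w x₀ hx0 h]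
    push_cast [Nat.cast_sub hwq]
    ring
  · push_neg at h
    simp only [reelE, reelC, if_neg (not_le.mpr h), sub_mod_self_eq B x₀ hxB,
      sub_div_self_eq B x₀ hx0 hxB, Nat.mod_eq_of_lt h, Nat.div_eq_of_lt h]
    push_cast [Nat.cast_sub hk]
    field_simp
    ring
end
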